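/- Let p ≥ 1 and let E₁,…,Eₙ be normed spaces over 𝕂. Then σ_p(x₁⊗⋯⊗xₙ) = ‖x₁‖⋯‖xₙ‖ for all x_l ∈ E_l, and ε_n(u) ≤ σ_p(u) for every u ∈ E₁⊗⋯⊗Eₙ; in particular σ_p(u) = 0 implies u = 0, so σ_p is a norm (a reasonable crossnorm) on E₁⊗⋯⊗Eₙ. -/

import Mathlib

open scoped TensorProduct
open PiTensorProduct

/-- The `ℓ_q` norm of a finite family of scalars, where `q` is the conjugate exponent
of `p` (`1/p + 1/q = 1`, with `q = ∞`, i.e. the sup norm, when `p = 1`). -/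
noncomputable def lqNorm {𝕜 : Type*} [RCLike 𝕜] (p : ℝ) {m : ℕ} (lam : Fin m → 𝕜) : ℝ :=
  if p = 1 then ⨆ j, ‖lam j‖ else (∑ j, ‖lam j‖ ^ (p / (p - 1))) ^ ((p - 1) / p)

/-- `sup_{‖φ_l‖ ≤ 1} Σ_j |φ₁(x_{1,j}) ⋯ φₙ(x_{n,j})|^p`. -/
noncomputable def supTerm (𝕜 : Type*) [RCLike 𝕜] {n : ℕ} {E : Fin n → Type*}
    [∀ i, NormedAddCommGroup (E i)] [∀ i, NormedSpace 𝕜 (E i)]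
    (p : ℝ) {m : ℕ} (x : Fin m → Π i, E i) : ℝ :=
  ⨆ φ : {φ : Π i, E i →L[𝕜] 𝕜 // ∀ i, ‖φ i‖ ≤ 1},
    ∑ j, (∏ i, ‖φ.1 i (x j i)‖) ^ p

/-- The tensor norm `σ_p` on `E₁ ⊗ ⋯ ⊗ Eₙ`. -/
noncomputable def sigmaNorm {𝕜 : Type*} [RCLike 𝕜] {n : ℕ} {E : Fin n → Type*}
    [∀ i, NormedAddCommGroup (E i)] [∀ i, NormedSpace 𝕜 (E i)]
    (p : ℝ) (u : ⨂[𝕜] i, E i) : ℝ :=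
  sInf { r : ℝ | ∃ (m : ℕ) (lam : Fin m → 𝕜) (x : Fin m → Π i, E i),
    u = (∑ j, lam j • ⨂ₜ[𝕜] i, x j i) ∧
    r = lqNorm p lam * (supTerm 𝕜 p x) ^ (1/p) }

/-- The functional on `E₁ ⊗ ⋯ ⊗ Eₙ` induced by functionals `φ i ∈ E i'`. -/
noncomputable def dualFunctional {𝕜 : Type*} [RCLike 𝕜] {n : ℕ} {E : Fin n → Type*}
    [∀ i, NormedAddCommGroup (E i)] [∀ i, NormedSpace 𝕜 (E i)]
    (φ : Π i, E i →L[𝕜] 𝕜) : (⨂[𝕜] i, E i) →ₗ[𝕜] 𝕜 :=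
  PiTensorProduct.lift
    ((ContinuousMultilinearMap.mkPiAlgebra 𝕜 (Fin n) 𝕜).compContinuousLinearMap φ).toMultilinearMap

/-- The injective norm `ε_n` on `E₁ ⊗ ⋯ ⊗ Eₙ`. -/
noncomputable def injNorm {𝕜 : Type*} [RCLike 𝕜] {n : ℕ} {E : Fin n → Type*}
    [∀ i, NormedAddCommGroup (E i)] [∀ i, NormedSpace 𝕜 (E i)]
    (u : ⨂[𝕜] i, E i) : ℝ :=
  ⨆ φ : {φ : Π i, E i →L[𝕜] 𝕜 // ∀ i, ‖φ i‖ ≤ 1}, ‖dualFunctional φ.1 u‖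

/-!
For a representation `u = ∑ⱼ λⱼ x₁ⱼ ⊗ ⋯ ⊗ xₙⱼ` and functionals `φₗ` of norm at most one, Hölder's
inequality gives `|(φ₁ ⊗ ⋯ ⊗ φₙ)(u)| ≤ ‖λ‖_q (∑ⱼ |φ₁(x₁ⱼ) ⋯ φₙ(xₙⱼ)|^p)^(1/p)`, hence `ε_n ≤ σ_p`.
The one-term representation gives `σ_p(x₁ ⊗ ⋯ ⊗ xₙ) ≤ ‖x₁‖ ⋯ ‖xₙ‖`, and Hahn–Banach norming
functionals give `‖x₁‖ ⋯ ‖xₙ‖ ≤ ε_n(x₁ ⊗ ⋯ ⊗ xₙ)`. If `ε_n(u) = 0`, every product functional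
vanishes on `u`. Now `u` comes from the tensor product of finite-dimensional subspaces `Fₗ ⊆ Eₗ`,
where the coordinate functionals of a product basis are products of coordinate functionals of
bases of the `Fₗ`; these extend to `Eₗ` by Hahn–Banach, so all coordinates of `u` vanish.
-/

theorem PiTensorProduct.exists_eq_sum_smul_tprod {R ι : Type*} [CommSemiring R]
    {M : ι → Type*} [∀ i, AddCommMonoid (M i)] [∀ i, Module R (M i)] (u : ⨂[R] i, M i) :
    ∃ (m : ℕ) (lam : Fin m → R) (x : Fin m → Π i, M i), u = ∑ j, lam j • ⨂ₜ[R] i, x j i := by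
  induction u using PiTensorProduct.induction_on with
  | smul_tprod r x => exact ⟨1, fun _ => r, fun _ => x, by simp⟩
  | add v w hv hw =>
    obtain ⟨m₁, lam₁, x₁, rfl⟩ := hv
    obtain ⟨m₂, lam₂, x₂, rfl⟩ := hw
    exact ⟨m₁ + m₂, Fin.append lam₁ lam₂, Fin.append x₁ x₂, by simp [Fin.sum_univ_add]⟩

theorem PiTensorProduct.exists_fg_mem_range_map_subtype {R ι : Type*} [CommSemiring R]
    {M : ι → Type*} [∀ i, AddCommMonoid (M i)] [∀ i, Module R (M i)] (u : ⨂[R] i, M i) :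
    ∃ F : Π i, Submodule R (M i), (∀ i, (F i).FG) ∧
      u ∈ LinearMap.range (map fun i => (F i).subtype) := by
  obtain ⟨m, lam, x, rfl⟩ := exists_eq_sum_smul_tprod u
  refine ⟨fun i => Submodule.span R (Set.range fun j => x j i),
    fun i => Submodule.fg_span (Set.finite_range _),
    ∑ j, lam j • ⨂ₜ[R] i, ⟨x j i, Submodule.subset_span ⟨j, rfl⟩⟩, ?_⟩
  simp [map_sum, map_tprod]

theorem PiTensorProduct.eq_zero_of_forall_lift_mkPiAlgebra_eq_zero {R ι : Type*} [CommSemiring R]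
    [Fintype ι] {M : ι → Type*} [∀ i, AddCommMonoid (M i)] [∀ i, Module R (M i)]
    [∀ i, Module.Free R (M i)] {u : ⨂[R] i, M i}
    (h : ∀ f : Π i, Module.Dual R (M i),
      lift ((MultilinearMap.mkPiAlgebra R ι R).compLinearMap f) u = 0) :
    u = 0 := by
  let b := fun i => Module.Free.chooseBasis R (M i)
  refine (Basis.piTensorProduct b).ext_elem fun k => ?_
  have hcoord : (Basis.piTensorProduct b).coord k =
      lift ((MultilinearMap.mkPiAlgebra R ι R).compLinearMap fun i => (b i).coord (k i)) :=
    PiTensorProduct.ext (MultilinearMap.ext fun x => by simp)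
  simpa using congrArg (· u) hcoord ▸ h _

section

variable {𝕜 : Type*} [RCLike 𝕜] {n : ℕ} {E : Fin n → Type*}
  [∀ i, NormedAddCommGroup (E i)] [∀ i, NormedSpace 𝕜 (E i)]

theorem dualFunctional_sum_smul_tprod (φ : Π i, E i →L[𝕜] 𝕜) {m : ℕ} (lam : Fin m → 𝕜)
    (x : Fin m → Π i, E i) :
    dualFunctional φ (∑ j, lam j • ⨂ₜ[𝕜] i, x j i) = ∑ j, lam j * ∏ i, φ i (x j i) := by
  simp [dualFunctional]

theorem dualFunctional_smul (c : Fin n → 𝕜) (φ : Π i, E i →L[𝕜] 𝕜) (u : ⨂[𝕜] i, E i) :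
    dualFunctional (fun i => c i • φ i) u = (∏ i, c i) * dualFunctional φ u := by
  induction u using PiTensorProduct.induction_on with
  | smul_tprod r x => simp [dualFunctional, Finset.prod_mul_distrib, mul_left_comm]
  | add v w hv hw => rw [map_add, map_add, hv, hw, mul_add]

instance : Nonempty {φ : Π i, E i →L[𝕜] 𝕜 // ∀ i, ‖φ i‖ ≤ 1} :=
  ⟨⟨0, fun _ => by simp⟩⟩

theorem prod_norm_apply_le (φ : {φ : Π i, E i →L[𝕜] 𝕜 // ∀ i, ‖φ i‖ ≤ 1}) (v : Π i, E i) :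
    ∏ i, ‖φ.1 i (v i)‖ ≤ ∏ i, ‖v i‖ :=
  Finset.prod_le_prod (fun _ _ => norm_nonneg _) fun i _ =>
    (φ.1 i).le_of_opNorm_le (φ.2 i) (v i) |>.trans_eq (one_mul _)

theorem norm_dualFunctional_sum_smul_tprod_le (φ : Π i, E i →L[𝕜] 𝕜) {m : ℕ}
    (lam : Fin m → 𝕜) (x : Fin m → Π i, E i) :
    ‖dualFunctional φ (∑ j, lam j • ⨂ₜ[𝕜] i, x j i)‖ ≤ ∑ j, ‖lam j‖ * ∏ i, ‖φ i (x j i)‖ := by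
  rw [dualFunctional_sum_smul_tprod]
  exact (norm_sum_le _ _).trans_eq (by simp only [norm_mul, norm_prod])

theorem norm_dualFunctional_le_injNorm (φ : {φ : Π i, E i →L[𝕜] 𝕜 // ∀ i, ‖φ i‖ ≤ 1})
    (u : ⨂[𝕜] i, E i) : ‖dualFunctional φ.1 u‖ ≤ injNorm u := by
  obtain ⟨m, lam, x, rfl⟩ := exists_eq_sum_smul_tprod u
  refine le_ciSup (f := fun ψ : {φ : Π i, E i →L[𝕜] 𝕜 // ∀ i, ‖φ i‖ ≤ 1} =>
    ‖dualFunctional ψ.1 _‖) ⟨∑ j, ‖lam j‖ * ∏ i, ‖x j i‖, ?_⟩ φ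
  rintro _ ⟨ψ, rfl⟩
  exact (norm_dualFunctional_sum_smul_tprod_le ψ.1 lam x).trans <| Finset.sum_le_sum fun j _ =>
    mul_le_mul_of_nonneg_left (prod_norm_apply_le ψ (x j)) (norm_nonneg _)

theorem injNorm_nonneg (u : ⨂[𝕜] i, E i) : 0 ≤ injNorm u :=
  Real.iSup_nonneg fun _ => norm_nonneg _

theorem le_injNorm_tprod (x : Π i, E i) : ∏ i, ‖x i‖ ≤ injNorm (⨂ₜ[𝕜] i, x i) := by
  choose g hg₁ hg₂ using fun i => exists_dual_vector'' 𝕜 (x i)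
  refine le_of_eq_of_le ?_ (norm_dualFunctional_le_injNorm ⟨g, hg₁⟩ _)
  simp [dualFunctional, hg₂]

theorem dualFunctional_eq_zero_of_injNorm_eq_zero {u : ⨂[𝕜] i, E i} (hu : injNorm u = 0)
    (φ : Π i, E i →L[𝕜] 𝕜) : dualFunctional φ u = 0 := by
  set c : Fin n → 𝕜 := fun i => ((max ‖φ i‖ 1)⁻¹ : ℝ)
  have hc : ∀ i, ‖c i • φ i‖ ≤ 1 := fun i => by
    rw [norm_smul, RCLike.norm_ofReal, abs_inv, abs_of_pos (by positivity),
      inv_mul_le_one₀ (by positivity)]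
    exact le_max_left _ _
  have h := norm_dualFunctional_le_injNorm ⟨fun i => c i • φ i, hc⟩ u
  rw [hu, norm_le_zero_iff, dualFunctional_smul, mul_eq_zero] at h
  exact h.resolve_left (Finset.prod_ne_zero_iff.mpr fun i _ => by simp only [c, ne_eq, RCLike.ofReal_eq_zero]; positivity)

theorem eq_zero_of_forall_dualFunctional_eq_zero {u : ⨂[𝕜] i, E i}
    (h : ∀ φ : Π i, E i →L[𝕜] 𝕜, dualFunctional φ u = 0) : u = 0 := by
  obtain ⟨F, hF, v, rfl⟩ := exists_fg_mem_range_map_subtype u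
  have : ∀ i, FiniteDimensional 𝕜 (F i) := fun i => Module.Finite.iff_fg.mpr (hF i)
  rw [eq_zero_of_forall_lift_mkPiAlgebra_eq_zero (u := v) fun f => ?_, map_zero]
  choose g hg _ using fun i =>
    exists_extension_norm_eq (F i) (LinearMap.toContinuousLinearMap (f i))
  have hlift : lift ((MultilinearMap.mkPiAlgebra 𝕜 (Fin n) 𝕜).compLinearMap f) =
      dualFunctional g ∘ₗ map fun i => (F i).subtype :=
    PiTensorProduct.ext (MultilinearMap.ext fun y => by simp [dualFunctional, hg])
  rw [hlift, LinearMap.comp_apply, h]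

theorem lqNorm_nonneg (p : ℝ) {m : ℕ} (lam : Fin m → 𝕜) : 0 ≤ lqNorm p lam := by
  unfold lqNorm
  split_ifs
  · exact Real.iSup_nonneg fun _ => norm_nonneg _
  · positivity

theorem lqNorm_fin_one_one (p : ℝ) : lqNorm p (fun _ : Fin 1 => (1 : 𝕜)) = 1 := by
  unfold lqNorm
  split_ifs <;> simp

theorem sum_norm_mul_le_lqNorm_mul {p : ℝ} (hp : 1 ≤ p) {m : ℕ} (lam : Fin m → 𝕜)
    {a : Fin m → ℝ} (ha : ∀ j, 0 ≤ a j) :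
    ∑ j, ‖lam j‖ * a j ≤ lqNorm p lam * (∑ j, a j ^ p) ^ (1 / p) := by
  rcases hp.eq_or_lt with rfl | hp
  · have hbdd : BddAbove (Set.range fun j => ‖lam j‖) := (Set.finite_range _).bddAbove
    simp only [lqNorm, if_pos, Real.rpow_one, div_one, Finset.mul_sum]
    exact Finset.sum_le_sum fun j _ => mul_le_mul_of_nonneg_right (le_ciSup hbdd j) (ha j)
  · have hpq : p.HolderConjugate (p / (p - 1)) := .conjExponent hp
    calc ∑ j, ‖lam j‖ * a j = ∑ j, a j * ‖lam j‖ := by simp_rw [mul_comm]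
      _ ≤ (∑ j, a j ^ p) ^ (1 / p) * (∑ j, ‖lam j‖ ^ (p / (p - 1))) ^ (1 / (p / (p - 1))) :=
        Real.inner_le_Lp_mul_Lq_of_nonneg _ hpq (fun j _ => ha j) fun j _ => norm_nonneg _
      _ = lqNorm p lam * (∑ j, a j ^ p) ^ (1 / p) := by
        rw [lqNorm, if_neg hp.ne', one_div_div, mul_comm]

theorem sum_prod_norm_apply_rpow_le {p : ℝ} (hp : 0 ≤ p) {m : ℕ} (x : Fin m → Π i, E i)
    (φ : {φ : Π i, E i →L[𝕜] 𝕜 // ∀ i, ‖φ i‖ ≤ 1}) :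
    ∑ j, (∏ i, ‖φ.1 i (x j i)‖) ^ p ≤ ∑ j, (∏ i, ‖x j i‖) ^ p :=
  Finset.sum_le_sum fun j _ => Real.rpow_le_rpow (by positivity) (prod_norm_apply_le φ (x j)) hp

theorem le_supTerm {p : ℝ} (hp : 0 ≤ p) {m : ℕ} (x : Fin m → Π i, E i)
    (φ : {φ : Π i, E i →L[𝕜] 𝕜 // ∀ i, ‖φ i‖ ≤ 1}) :
    ∑ j, (∏ i, ‖φ.1 i (x j i)‖) ^ p ≤ supTerm 𝕜 p x :=
  le_ciSup ⟨_, by rintro _ ⟨ψ, rfl⟩; exact sum_prod_norm_apply_rpow_le hp x ψ⟩ φ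

theorem supTerm_le {p : ℝ} (hp : 0 ≤ p) {m : ℕ} (x : Fin m → Π i, E i) :
    supTerm 𝕜 p x ≤ ∑ j, (∏ i, ‖x j i‖) ^ p :=
  ciSup_le (sum_prod_norm_apply_rpow_le hp x)

theorem supTerm_nonneg (p : ℝ) {m : ℕ} (x : Fin m → Π i, E i) : 0 ≤ supTerm 𝕜 p x :=
  Real.iSup_nonneg fun _ => by positivity

theorem sigmaNorm_le (p : ℝ) {m : ℕ} (lam : Fin m → 𝕜) (x : Fin m → Π i, E i) :
    sigmaNorm p (∑ j, lam j • ⨂ₜ[𝕜] i, x j i) ≤ lqNorm p lam * supTerm 𝕜 p x ^ (1 / p) := by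
  refine csInf_le ⟨0, ?_⟩ ⟨m, lam, x, rfl, rfl⟩
  rintro _ ⟨-, lam', x', -, rfl⟩
  exact mul_nonneg (lqNorm_nonneg p lam') (Real.rpow_nonneg (supTerm_nonneg p x') _)

theorem le_sigmaNorm {p c : ℝ} {u : ⨂[𝕜] i, E i}
    (h : ∀ (m : ℕ) (lam : Fin m → 𝕜) (x : Fin m → Π i, E i),
      u = (∑ j, lam j • ⨂ₜ[𝕜] i, x j i) → c ≤ lqNorm p lam * supTerm 𝕜 p x ^ (1 / p)) :
    c ≤ sigmaNorm p u := by
  obtain ⟨m, lam, x, hu⟩ := exists_eq_sum_smul_tprod u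
  refine le_csInf ⟨_, m, lam, x, hu, rfl⟩ ?_
  rintro _ ⟨m, lam, x, hu, rfl⟩
  exact h m lam x hu

theorem injNorm_le_sigmaNorm {p : ℝ} (hp : 1 ≤ p) (u : ⨂[𝕜] i, E i) :
    injNorm u ≤ sigmaNorm p u := by
  refine le_sigmaNorm fun m lam x hu => ?_
  refine ciSup_le fun φ => ?_
  calc ‖dualFunctional φ.1 u‖ ≤ ∑ j, ‖lam j‖ * ∏ i, ‖φ.1 i (x j i)‖ :=
        hu ▸ norm_dualFunctional_sum_smul_tprod_le φ.1 lam x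
    _ ≤ lqNorm p lam * (∑ j, (∏ i, ‖φ.1 i (x j i)‖) ^ p) ^ (1 / p) :=
        sum_norm_mul_le_lqNorm_mul hp lam fun j => by positivity
    _ ≤ lqNorm p lam * supTerm 𝕜 p x ^ (1 / p) := by
        gcongr
        exacts [lqNorm_nonneg p lam, le_supTerm (by linarith) x φ]

theorem sigmaNorm_tprod_le {p : ℝ} (hp : 0 < p) (x : Π i, E i) :
    sigmaNorm p (⨂ₜ[𝕜] i, x i) ≤ ∏ i, ‖x i‖ := by
  have h := sigmaNorm_le p (fun _ : Fin 1 => (1 : 𝕜)) fun _ => x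
  simp only [Fin.sum_univ_one, one_smul, lqNorm_fin_one_one, one_mul] at h
  refine h.trans ?_
  calc supTerm 𝕜 p (fun _ : Fin 1 => x) ^ (1 / p) ≤ ((∏ i, ‖x i‖) ^ p) ^ (1 / p) := by
        gcongr
        · exact supTerm_nonneg p _
        · simpa using supTerm_le hp.le fun _ : Fin 1 => x
    _ = ∏ i, ‖x i‖ := by rw [one_div, Real.rpow_rpow_inv (by positivity) hp.ne']

end

theorem sigmaNorm_crossnorm_general {𝕜 : Type*} [RCLike 𝕜] {n : ℕ}
    (E : Fin n → Type*) [∀ i, NormedAddCommGroup (E i)] [∀ i, NormedSpace 𝕜 (E i)]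
    (p : ℝ) (hp : 1 ≤ p) :
    (∀ x : Π i, E i, sigmaNorm p (⨂ₜ[𝕜] i, x i) = ∏ i, ‖x i‖) ∧
    (∀ u : ⨂[𝕜] i, E i, injNorm u ≤ sigmaNorm p u) ∧
    (∀ u : ⨂[𝕜] i, E i, sigmaNorm p u = 0 → u = 0) := by
  refine ⟨fun x => ?_, injNorm_le_sigmaNorm hp, fun u hu => ?_⟩
  · exact (sigmaNorm_tprod_le (by linarith) x).antisymm
      ((le_injNorm_tprod x).trans (injNorm_le_sigmaNorm hp _))
  · have h₀ : injNorm u = 0 := (hu ▸ injNorm_le_sigmaNorm hp u).antisymm (injNorm_nonneg u)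
    exact eq_zero_of_forall_dualFunctional_eq_zero (dualFunctional_eq_zero_of_injNorm_eq_zero h₀)

/-- `σ_p` is a reasonable crossnorm: `σ_p(x₁ ⊗ ⋯ ⊗ xₙ) = ‖x₁‖ ⋯ ‖xₙ‖`, `ε_n ≤ σ_p`,
and in particular `σ_p(u) = 0` implies `u = 0`, so `σ_p` is a norm. -/
theorem sigmaNorm_crossnorm {𝕜 : Type*} [RCLike 𝕜] {n : ℕ} (hn : 1 ≤ n)
    (E : Fin n → Type*) [∀ i, NormedAddCommGroup (E i)] [∀ i, NormedSpace 𝕜 (E i)]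
    (p : ℝ) (hp : 1 ≤ p) :
    (∀ x : Π i, E i, sigmaNorm p (⨂ₜ[𝕜] i, x i) = ∏ i, ‖x i‖) ∧
    (∀ u : ⨂[𝕜] i, E i, injNorm u ≤ sigmaNorm p u) ∧
    (∀ u : ⨂[𝕜] i, E i, sigmaNorm p u = 0 → u = 0) :=
  sigmaNorm_crossnorm_general E p hp
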